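/- Let j ∈ ℕ, let α satisfy max(0, d-2j-2) < α < d-2j, set γ = α - d + 2j + 1, and let μ ∈ C_c^∞(ℝ^d;ℝ). For every integer ℓ with 1 ≤ ℓ ≤ j, the following identity holds pointwise on ℝ^d × (0,∞): Δ_γ^ℓ 𝒦_{μ,α} = (-1)^ℓ [ ∏_{q=0}^{ℓ-1} (α + 2q)(2j - 2q) ] ⋅ 𝒦_{μ, α+2ℓ}. -/

import Mathlib

open MeasureTheory

noncomputable section

/-- The operator `Δ_γ f = Δ_{(x,ξ)} f + (γ/ξ) ∂_ξ f` on functions on `ℝ^d × ℝ`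
(relevant on the upper half-space `ξ > 0`). -/
noncomputable def dgamma (d : ℕ) (γ : ℝ)
    (f : EuclideanSpace ℝ (Fin d) × ℝ → ℝ)
    (p : EuclideanSpace ℝ (Fin d) × ℝ) : ℝ :=
  (∑ i : Fin d,
      fderiv ℝ (fun q => fderiv ℝ f q (EuclideanSpace.single i 1, 0)) p
        (EuclideanSpace.single i 1, 0))
    + fderiv ℝ (fun q => fderiv ℝ f q (0, 1)) p
        ((0 : EuclideanSpace ℝ (Fin d)), (1 : ℝ))
    + γ / p.2 * fderiv ℝ f p ((0 : EuclideanSpace ℝ (Fin d)), (1 : ℝ))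

/-- The extended potential `𝒦_{μ,β}(x,ξ) = ∫ |(x-y,ξ)|^{-β} μ(y) dy` on the upper
half-space. -/
noncomputable def Kext (d : ℕ) (β : ℝ) (μ : EuclideanSpace ℝ (Fin d) → ℝ)
    (p : EuclideanSpace ℝ (Fin d) × ℝ) : ℝ :=
  ∫ y, (‖p.1 - y‖ ^ 2 + p.2 ^ 2) ^ (-β / 2) * μ y

/-!
For `ξ > 0` the kernel `|(z, ξ)|^{-β}` is smooth and satisfies
`Δ_γ |·|^{-β} = β (β + 1 - d - γ) |·|^{-β-2}`. Since `μ` is continuous with compact support,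
`Δ_γ` can be taken under the integral defining `𝒦_{μ,β}` (the kernel is translated only in
`x`, and `γ / ξ` does not see that translation), so `Δ_γ 𝒦_{μ,β} = β (β + 1 - d - γ) 𝒦_{μ,β+2}`.
Iterating from `β = α`, the `q`-th step has `β = α + 2q`, and `γ = α - d + 2j + 1` turns the
factor `β + 1 - d - γ` into `-(2j - 2q)`.
-/

open Filter Topology

variable {d : ℕ}

def upperHalfSpace (d : ℕ) : Set (EuclideanSpace ℝ (Fin d) × ℝ) := {z | 0 < z.2}

lemma isOpen_upperHalfSpace : IsOpen (upperHalfSpace d) :=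
  isOpen_lt continuous_const continuous_snd

def extKernel (d : ℕ) (β : ℝ) (z : EuclideanSpace ℝ (Fin d) × ℝ) : ℝ :=
  (‖z.1‖ ^ 2 + z.2 ^ 2) ^ (-β / 2)

/-- The Euclidean inner product of `ℝ^d × ℝ`, which the product type (with its sup norm) does not
carry as an instance. -/
def prodInnerSL (z : EuclideanSpace ℝ (Fin d) × ℝ) : EuclideanSpace ℝ (Fin d) × ℝ →L[ℝ] ℝ :=
  (innerSL ℝ z.1).comp (ContinuousLinearMap.fst ℝ _ ℝ) + z.2 • ContinuousLinearMap.snd ℝ _ ℝ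

lemma prodInnerSL_apply (z v : EuclideanSpace ℝ (Fin d) × ℝ) :
    prodInnerSL z v = inner ℝ z.1 v.1 + z.2 * v.2 := by
  simp [prodInnerSL]

lemma prodInnerSL_comm (z v : EuclideanSpace ℝ (Fin d) × ℝ) :
    prodInnerSL z v = prodInnerSL v z := by
  rw [prodInnerSL_apply, prodInnerSL_apply, real_inner_comm, mul_comm]

lemma prodInnerSL_single (z : EuclideanSpace ℝ (Fin d) × ℝ) (i : Fin d) :
    prodInnerSL z (EuclideanSpace.single i 1, 0) = z.1 i := by
  simp [prodInnerSL_apply, EuclideanSpace.inner_single_right]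

lemma prodInnerSL_vertical (z : EuclideanSpace ℝ (Fin d) × ℝ) : prodInnerSL z (0, 1) = z.2 := by
  simp [prodInnerSL_apply]

lemma norm_sq_add_sq_pos {z : EuclideanSpace ℝ (Fin d) × ℝ} (hz : 0 < z.2) :
    0 < ‖z.1‖ ^ 2 + z.2 ^ 2 := by
  positivity

lemma hasFDerivAt_norm_sq_add_sq (z : EuclideanSpace ℝ (Fin d) × ℝ) :
    HasFDerivAt (fun z : EuclideanSpace ℝ (Fin d) × ℝ => ‖z.1‖ ^ 2 + z.2 ^ 2)
      (2 • prodInnerSL z) z := by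
  refine ((hasFDerivAt_fst.norm_sq).add ((hasFDerivAt_snd (𝕜 := ℝ) (p := z)).pow 2)).congr_fderiv ?_
  ext v <;> simp [prodInnerSL_apply]

lemma contDiffOn_extKernel (β : ℝ) {n : WithTop ℕ∞} :
    ContDiffOn ℝ n (extKernel d β) (upperHalfSpace d) := by
  refine ContDiffOn.rpow_const_of_ne ?_ fun z hz => (norm_sq_add_sq_pos hz).ne'
  exact ((contDiff_norm_sq ℝ).comp contDiff_fst |>.add (contDiff_snd.pow 2)).contDiffOn

lemma hasFDerivAt_extKernel (β : ℝ) {z : EuclideanSpace ℝ (Fin d) × ℝ} (hz : 0 < z.2) :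
    HasFDerivAt (extKernel d β) ((-β * extKernel d (β + 2) z) • prodInnerSL z) z := by
  refine ((hasFDerivAt_norm_sq_add_sq z).rpow_const (p := -β / 2)
    (Or.inl (norm_sq_add_sq_pos hz).ne')).congr_fderiv ?_
  refine ContinuousLinearMap.ext fun v => ?_
  simp only [smul_apply, nsmul_eq_mul, Nat.cast_ofNat, smul_eq_mul, extKernel, neg_add_rev, neg_mul]
  ring_nf

lemma fderiv_extKernel_apply (β : ℝ) {z : EuclideanSpace ℝ (Fin d) × ℝ} (hz : 0 < z.2)
    (v : EuclideanSpace ℝ (Fin d) × ℝ) :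
    fderiv ℝ (extKernel d β) z v = -β * extKernel d (β + 2) z * prodInnerSL z v := by
  simp [(hasFDerivAt_extKernel β hz).fderiv]

lemma fderiv_fderiv_extKernel_apply (β : ℝ) {z : EuclideanSpace ℝ (Fin d) × ℝ} (hz : 0 < z.2)
    (v w : EuclideanSpace ℝ (Fin d) × ℝ) :
    fderiv ℝ (fun q => fderiv ℝ (extKernel d β) q v) z w =
      β * (β + 2) * extKernel d (β + 4) z * prodInnerSL z v * prodInnerSL z w
        - β * extKernel d (β + 2) z * prodInnerSL v w := by
  have hfirst : (fun q => fderiv ℝ (extKernel d β) q v) =ᶠ[𝓝 z]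
      fun q => -β * extKernel d (β + 2) q * prodInnerSL v q := by
    filter_upwards [isOpen_upperHalfSpace.mem_nhds hz] with q hq
    rw [fderiv_extKernel_apply β hq, prodInnerSL_comm]
  have hderiv :=
    ((hasFDerivAt_extKernel (β + 2) hz).const_mul (-β)).fun_mul (prodInnerSL v).hasFDerivAt
  rw [hfirst.fderiv_eq, hderiv.fderiv]
  simp only [neg_mul, neg_smul, prodInnerSL_comm v z, show β + 2 + 2 = β + 4 by ring, smul_neg,
    add_apply, neg_apply, smul_apply, smul_eq_mul]
  ring

lemma extKernel_add_two_mul_norm_sq_add_sq (β : ℝ) {z : EuclideanSpace ℝ (Fin d) × ℝ}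
    (hz : 0 < z.2) :
    extKernel d (β + 2) z * (‖z.1‖ ^ 2 + z.2 ^ 2) = extKernel d β z := by
  rw [extKernel, extKernel, ← Real.rpow_add_one (norm_sq_add_sq_pos hz).ne']
  ring_nf

theorem dgamma_extKernel (β γ : ℝ) {z : EuclideanSpace ℝ (Fin d) × ℝ} (hz : 0 < z.2) :
    dgamma d γ (extKernel d β) z = β * (β + 1 - d - γ) * extKernel d (β + 2) z := by
  simp only [dgamma, fderiv_fderiv_extKernel_apply β hz, fderiv_extKernel_apply β hz,
    prodInnerSL_single, prodInnerSL_vertical]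
  have hK : extKernel d (β + 4) z * (‖z.1‖ ^ 2 + z.2 ^ 2) = extKernel d (β + 2) z := by
    rw [← extKernel_add_two_mul_norm_sq_add_sq (β + 2) hz]; ring_nf
  have hsum : ∑ i : Fin d, z.1 i * z.1 i = ‖z.1‖ ^ 2 := by
    rw [EuclideanSpace.real_norm_sq_eq]; simp only [sq]
  have hγ : γ / z.2 * z.2 = γ := div_mul_cancel₀ γ hz.ne'
  simp only [Finset.sum_sub_distrib, mul_assoc, ← Finset.mul_sum, hsum]
  simp only [PiLp.single_eq_same, Finset.sum_const, Finset.card_univ, Fintype.card_fin,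
    nsmul_eq_mul, mul_one]
  linear_combination (β * (β + 2)) * hK - β * extKernel d (β + 2) z * hγ

section Potential

variable {μ : EuclideanSpace ℝ (Fin d) → ℝ} {p : EuclideanSpace ℝ (Fin d) × ℝ}

def potential (μ : EuclideanSpace ℝ (Fin d) → ℝ) (g : EuclideanSpace ℝ (Fin d) × ℝ → ℝ)
    (p : EuclideanSpace ℝ (Fin d) × ℝ) : ℝ :=
  ∫ y, g (p.1 - y, p.2) * μ y

lemma Kext_eq_potential (β : ℝ) (μ : EuclideanSpace ℝ (Fin d) → ℝ) :
    Kext d β μ = potential μ (extKernel d β) :=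
  rfl

lemma ContinuousOn.continuous_comp_horizontal_sub {F : Type*} [TopologicalSpace F]
    {g : EuclideanSpace ℝ (Fin d) × ℝ → F} (hg : ContinuousOn g (upperHalfSpace d))
    (hp : 0 < p.2) : Continuous fun y => g (p.1 - y, p.2) :=
  hg.comp_continuous ((continuous_const.sub continuous_id).prodMk continuous_const) fun _ => hp

lemma integrable_potential_integrand (hμ : Continuous μ) (hμs : HasCompactSupport μ)
    {g : EuclideanSpace ℝ (Fin d) × ℝ → ℝ} (hg : ContinuousOn g (upperHalfSpace d))
    (hp : 0 < p.2) : Integrable fun y => g (p.1 - y, p.2) * μ y :=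
  ((hg.continuous_comp_horizontal_sub hp).mul hμ).integrable_of_hasCompactSupport hμs.mul_left

lemma snd_pos_of_mem_closedBall {q : EuclideanSpace ℝ (Fin d) × ℝ} (hp : 0 < p.2)
    (hq : q ∈ Metric.closedBall p (p.2 / 2)) : 0 < q.2 := by
  have hdist : dist q.2 p.2 ≤ p.2 / 2 :=
    (Prod.dist_eq (x := q) (y := p) ▸ le_max_right _ _).trans hq
  linarith [(abs_sub_le_iff.1 (Real.dist_eq q.2 p.2 ▸ hdist)).2]

lemma hasFDerivAt_potential (hμ : Continuous μ) (hμs : HasCompactSupport μ)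
    {g : EuclideanSpace ℝ (Fin d) × ℝ → ℝ} (hg : ContDiffOn ℝ 1 g (upperHalfSpace d))
    (hp : 0 < p.2) :
    HasFDerivAt (potential μ g) (∫ y, μ y • fderiv ℝ g (p.1 - y, p.2)) p := by
  have hg' : ContinuousOn (fderiv ℝ g) (upperHalfSpace d) :=
    hg.continuousOn_fderiv_of_isOpen isOpen_upperHalfSpace le_rfl
  have hε : 0 < p.2 / 2 := by linarith
  have hball : ∀ q ∈ Metric.ball p (p.2 / 2), 0 < q.2 := fun q hq =>
    snd_pos_of_mem_closedBall hp (Metric.ball_subset_closedBall hq)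
  obtain ⟨C, hC⟩ : ∃ C, ∀ q ∈ Metric.closedBall p (p.2 / 2), ∀ y ∈ tsupport μ,
      ‖fderiv ℝ g (q.1 - y, q.2)‖ ≤ C := by
    have hK := ((isCompact_closedBall p (p.2 / 2)).prod hμs).image
      (f := fun w : (EuclideanSpace ℝ (Fin d) × ℝ) × EuclideanSpace ℝ (Fin d) =>
        ((w.1.1 - w.2, w.1.2) : EuclideanSpace ℝ (Fin d) × ℝ)) (by fun_prop)
    obtain ⟨C, hC⟩ := hK.exists_bound_of_continuousOn <| hg'.mono <| by
      rintro _ ⟨⟨q, y⟩, ⟨hq, -⟩, rfl⟩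
      exact snd_pos_of_mem_closedBall (q := q) hp hq
    exact ⟨C, fun q hq y hy => hC _ ⟨(q, y), ⟨hq, hy⟩, rfl⟩⟩
  refine hasFDerivAt_integral_of_dominated_of_fderiv_le (bound := fun y => C * |μ y|)
    (F' := fun q y => μ y • fderiv ℝ g (q.1 - y, q.2)) (Metric.ball_mem_nhds p hε)
    ?_ ?_ ?_ ?_ ?_ ?_
  · filter_upwards [Metric.ball_mem_nhds p hε] with q hq
    exact (integrable_potential_integrand hμ hμs hg.continuousOn (hball q hq)).aestronglyMeasurable
  · exact integrable_potential_integrand hμ hμs hg.continuousOn hp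
  · exact (hμ.smul (hg'.continuous_comp_horizontal_sub hp)).aestronglyMeasurable
  · refine .of_forall fun y q hq => ?_
    rw [norm_smul, Real.norm_eq_abs, mul_comm]
    by_cases hy : y ∈ tsupport μ
    · exact mul_le_mul_of_nonneg_right (hC q (Metric.ball_subset_closedBall hq) y hy)
        (abs_nonneg _)
    · simp [image_eq_zero_of_notMem_tsupport hy]
  · exact (continuous_const.mul hμ.abs).integrable_of_hasCompactSupport hμs.abs.mul_left
  · refine .of_forall fun y q hq => ?_
    have hshift : HasFDerivAt (fun q : EuclideanSpace ℝ (Fin d) × ℝ => (q.1 - y, q.2))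
        (ContinuousLinearMap.id ℝ _) q := by
      simpa using (hasFDerivAt_fst.sub_const y).prodMk (hasFDerivAt_snd (𝕜 := ℝ) (p := q))
    have hgq : HasFDerivAt g (fderiv ℝ g (q.1 - y, q.2)) (q.1 - y, q.2) :=
      ((hg.differentiableOn one_ne_zero).differentiableAt
        (isOpen_upperHalfSpace.mem_nhds (x := (q.1 - y, q.2)) (hball q hq))).hasFDerivAt
    simpa using (hgq.comp q hshift).mul_const (μ y)

lemma fderiv_potential_apply (hμ : Continuous μ) (hμs : HasCompactSupport μ)
    {g : EuclideanSpace ℝ (Fin d) × ℝ → ℝ} (hg : ContDiffOn ℝ 1 g (upperHalfSpace d))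
    (hp : 0 < p.2) (v : EuclideanSpace ℝ (Fin d) × ℝ) :
    fderiv ℝ (potential μ g) p v = potential μ (fun z => fderiv ℝ g z v) p := by
  have hint : Integrable fun y => μ y • fderiv ℝ g (p.1 - y, p.2) :=
    (hμ.smul ((hg.continuousOn_fderiv_of_isOpen isOpen_upperHalfSpace le_rfl)
      |>.continuous_comp_horizontal_sub hp)).integrable_of_hasCompactSupport hμs.smul_right
  rw [(hasFDerivAt_potential hμ hμs hg hp).fderiv, ContinuousLinearMap.integral_apply hint]
  simp [potential, mul_comm]

lemma ContDiffOn.fderiv_apply_upperHalfSpace {n : ℕ} {g : EuclideanSpace ℝ (Fin d) × ℝ → ℝ}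
    (hg : ContDiffOn ℝ (n + 1) g (upperHalfSpace d)) (v : EuclideanSpace ℝ (Fin d) × ℝ) :
    ContDiffOn ℝ n (fun z => fderiv ℝ g z v) (upperHalfSpace d) :=
  (hg.fderiv_of_isOpen isOpen_upperHalfSpace le_rfl).clm_apply contDiffOn_const

lemma fderiv_fderiv_potential_apply (hμ : Continuous μ) (hμs : HasCompactSupport μ)
    {g : EuclideanSpace ℝ (Fin d) × ℝ → ℝ} (hg : ContDiffOn ℝ 2 g (upperHalfSpace d))
    (hp : 0 < p.2) (v w : EuclideanSpace ℝ (Fin d) × ℝ) :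
    fderiv ℝ (fun q => fderiv ℝ (potential μ g) q v) p w =
      potential μ (fun z => fderiv ℝ (fun q => fderiv ℝ g q v) z w) p := by
  have hev : (fun q => fderiv ℝ (potential μ g) q v) =ᶠ[𝓝 p]
      potential μ (fun z => fderiv ℝ g z v) := by
    filter_upwards [isOpen_upperHalfSpace.mem_nhds hp] with q hq
    exact fderiv_potential_apply hμ hμs (hg.of_le (by norm_num)) hq v
  rw [hev.fderiv_eq, fderiv_potential_apply hμ hμs (hg.fderiv_apply_upperHalfSpace v) hp w]

theorem dgamma_potential (hμ : Continuous μ) (hμs : HasCompactSupport μ) (γ : ℝ)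
    {g : EuclideanSpace ℝ (Fin d) × ℝ → ℝ} (hg : ContDiffOn ℝ 2 g (upperHalfSpace d))
    (hp : 0 < p.2) : dgamma d γ (potential μ g) p = potential μ (dgamma d γ g) p := by
  have hint₂ : ∀ v w, Integrable fun y =>
      fderiv ℝ (fun q => fderiv ℝ g q v) (p.1 - y, p.2) w * μ y := fun v w =>
    integrable_potential_integrand hμ hμs
      ((hg.fderiv_apply_upperHalfSpace (n := 1) v).fderiv_apply_upperHalfSpace w).continuousOn hp
  have hint₁ : Integrable fun y => fderiv ℝ g (p.1 - y, p.2) (0, 1) * μ y :=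
    integrable_potential_integrand hμ hμs
      (hg.fderiv_apply_upperHalfSpace (n := 1) _).continuousOn hp
  simp only [dgamma, fderiv_fderiv_potential_apply hμ hμs hg hp,
    fderiv_potential_apply hμ hμs (hg.of_le (by norm_num)) hp, potential, add_mul,
    Finset.sum_mul, mul_assoc]
  rw [integral_add ((integrable_finsetSum _ fun i _ => hint₂ _ _).fun_add (hint₂ _ _))
      (hint₁.const_mul _),
    integral_add (integrable_finsetSum _ fun i _ => hint₂ _ _) (hint₂ _ _),
    integral_finsetSum _ fun i _ => hint₂ _ _, integral_const_mul]

end Potential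

lemma dgamma_congr {γ : ℝ} {f g : EuclideanSpace ℝ (Fin d) × ℝ → ℝ}
    {p : EuclideanSpace ℝ (Fin d) × ℝ} (h : f =ᶠ[𝓝 p] g) : dgamma d γ f p = dgamma d γ g p := by
  have h' : ∀ v, (fun q => fderiv ℝ f q v) =ᶠ[𝓝 p] fun q => fderiv ℝ g q v := fun v =>
    (h.fderiv (𝕜 := ℝ)).mono fun q hq => by simp only [hq]
  simp only [dgamma, (h' _).fderiv_eq, h.fderiv_eq]

lemma dgamma_const_mul (γ c : ℝ) (f : EuclideanSpace ℝ (Fin d) × ℝ → ℝ)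
    (p : EuclideanSpace ℝ (Fin d) × ℝ) :
    dgamma d γ (fun q => c * f q) p = c * dgamma d γ f p := by
  have hfirst : (fun q => fderiv ℝ (fun q => c * f q) q) = c • fderiv ℝ f :=
    fderiv_const_smul_field (f := f) c
  have hsecond : ∀ v, fderiv ℝ (fun q => c * fderiv ℝ f q v) p =
      c • fderiv ℝ (fun q => fderiv ℝ f q v) p :=
    fun v => congrFun (fderiv_const_smul_field (f := fun q => fderiv ℝ f q v) c) p
  simp only [dgamma, hfirst, Pi.smul_apply, smul_apply, smul_eq_mul, hsecond,
    mul_add, Finset.mul_sum]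
  ring

theorem dgamma_Kext {μ : EuclideanSpace ℝ (Fin d) → ℝ} (hμ : Continuous μ)
    (hμs : HasCompactSupport μ) (β γ : ℝ) {p : EuclideanSpace ℝ (Fin d) × ℝ} (hp : 0 < p.2) :
    dgamma d γ (Kext d β μ) p = β * (β + 1 - d - γ) * Kext d (β + 2) μ p := by
  rw [Kext_eq_potential, dgamma_potential hμ hμs γ (contDiffOn_extKernel β) hp, Kext_eq_potential,
    potential, potential, ← integral_const_mul]
  congr 1 with y
  rw [dgamma_extKernel β γ (z := (p.1 - y, p.2)) hp, mul_assoc]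

theorem iterate_dgamma_Kext {μ : EuclideanSpace ℝ (Fin d) → ℝ} (hμ : Continuous μ)
    (hμs : HasCompactSupport μ) (α γ : ℝ) (m : ℕ) {p : EuclideanSpace ℝ (Fin d) × ℝ}
    (hp : 0 < p.2) :
    (dgamma d γ)^[m] (Kext d α μ) p =
      (∏ q ∈ Finset.range m, (α + 2 * q) * (α + 2 * q + 1 - d - γ)) * Kext d (α + 2 * m) μ p := by
  induction m generalizing p with
  | zero => simp
  | succ m ih =>
    have hlocal : (dgamma d γ)^[m] (Kext d α μ) =ᶠ[𝓝 p] fun q =>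
        (∏ q ∈ Finset.range m, (α + 2 * q) * (α + 2 * q + 1 - d - γ)) *
          Kext d (α + 2 * m) μ q := by
      filter_upwards [isOpen_upperHalfSpace.mem_nhds hp] with q hq using ih hq
    rw [Function.iterate_succ_apply', dgamma_congr hlocal, dgamma_const_mul,
      dgamma_Kext hμ hμs _ γ hp, Finset.prod_range_succ, Nat.cast_succ,
      show α + 2 * ((m : ℝ) + 1) = α + 2 * m + 2 by ring]
    ring

theorem stmt_17_general (d j : ℕ) (α γ : ℝ)
    (hγ : γ = α - d + 2 * j + 1)
    (μ : EuclideanSpace ℝ (Fin d) → ℝ)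
    (hμ : ContDiff ℝ (⊤ : ℕ∞) μ) (hμs : HasCompactSupport μ)
    (ℓ : ℕ) :
    ∀ p : EuclideanSpace ℝ (Fin d) × ℝ, 0 < p.2 →
      (dgamma d γ)^[ℓ] (Kext d α μ) p
        = (-1 : ℝ) ^ ℓ *
            (∏ q ∈ Finset.range ℓ, ((α + 2 * q) * (2 * (j : ℝ) - 2 * q))) *
            Kext d (α + 2 * ℓ) μ p := by
  intro p hp
  rw [iterate_dgamma_Kext hμ.continuous hμs α γ ℓ hp, ← Finset.card_range ℓ, ← Finset.prod_const,
    Finset.card_range, ← Finset.prod_mul_distrib]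
  congr 1
  refine Finset.prod_congr rfl fun q _ => ?_
  rw [hγ]
  ring

/-- For `max(0,d-2j-2) < α < d-2j`, `γ = α-d+2j+1`, `μ ∈ C_c^∞(ℝ^d)`,
and `1 ≤ ℓ ≤ j`, pointwise on the upper half-space,
`Δ_γ^ℓ 𝒦_{μ,α} = (-1)^ℓ [∏_{q=0}^{ℓ-1} (α+2q)(2j-2q)] 𝒦_{μ,α+2ℓ}`. -/
theorem stmt_17 (d j : ℕ) (α γ : ℝ)
    (hα₁ : max 0 ((d : ℝ) - 2 * j - 2) < α) (hα₂ : α < (d : ℝ) - 2 * j)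
    (hγ : γ = α - d + 2 * j + 1)
    (μ : EuclideanSpace ℝ (Fin d) → ℝ)
    (hμ : ContDiff ℝ (⊤ : ℕ∞) μ) (hμs : HasCompactSupport μ)
    (ℓ : ℕ) (hℓ₁ : 1 ≤ ℓ) (hℓ₂ : ℓ ≤ j) :
    ∀ p : EuclideanSpace ℝ (Fin d) × ℝ, 0 < p.2 →
      (dgamma d γ)^[ℓ] (Kext d α μ) p
        = (-1 : ℝ) ^ ℓ *
            (∏ q ∈ Finset.range ℓ, ((α + 2 * q) * (2 * (j : ℝ) - 2 * q))) *
            Kext d (α + 2 * ℓ) μ p :=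
  stmt_17_general d j α γ hγ μ hμ hμs ℓ
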